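/- arXiv:1911.03291 — 3 statements merged into one kernel-verified Lean document; each statement's English description precedes it below -/
import Mathlib

section
/- Let n, f, ω be natural numbers with ω = ⌊(n+f)/2⌋ + 1. If two transactions q and r each have at least ω valid endorsements at a correct node, where the set of endorsers of q that are correct is disjoint from the set of correct endorsers of r, and there are at most f Byzantine endorsers (each possibly endorsing both) among n total endorsers, then we reach a contradiction. Hence no correct node ever deems two conflicting transactions simultaneously applicable (Local safety). -/
/-- Local safety: two conflicting transactions cannot both gather ω = ⌊(n+f)/2⌋+1
endorsements when correct endorsers of the two are disjoint and at most f of the n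
endorsers are Byzantine. -/
theorem local_safety {α : Type*} [DecidableEq α] (n f ω : ℕ)
    (E B Q R : Finset α)
    (hBE : B ⊆ E) (hQE : Q ⊆ E) (hRE : R ⊆ E)
    (hn : E.card = n) (hf : B.card ≤ f)
    (hdisj : Disjoint (Q \ B) (R \ B))
    (hω : ω = (n + f) / 2 + 1)
    (hQ : ω ≤ Q.card) (hR : ω ≤ R.card) : False := by
  have hI : Q ∩ R ⊆ B := by
    intro x hx
    simp only [Finset.mem_inter] at hx
    by_contra hxB
    exact (Finset.disjoint_left.mp hdisj (Finset.mem_sdiff.mpr ⟨hx.1, hxB⟩))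
      (Finset.mem_sdiff.mpr ⟨hx.2, hxB⟩)
  have h1 : (Q ∪ R).card ≤ n := hn ▸ Finset.card_le_card (Finset.union_subset hQE hRE)
  have h2 : (Q ∩ R).card ≤ f := le_trans (Finset.card_le_card hI) hf
  have h3 : Q.card + R.card = (Q ∪ R).card + (Q ∩ R).card :=
    (Finset.card_union_add_card_inter Q R).symm
  omega
end

section
/- BVP Validity: in the Byzantine Veto Procedure of Algorithm 6, if any correct node proposes 0 (veto), then every correct node that follows the algorithm and eventually receives that node's evidence decides 0; conversely if a correct node decides 1 then no correct node proposed 0. Formally, under the assumption that every correct node receives the same set of endorsements for transactions in T̄ by time deadline + τ̂, all correct nodes output the same decision. -/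
/-- BVP Validity and Agreement under eventual synchrony: correct nodes that
receive the same endorsement set all decide the same value; a correct veto (0)
forces every correct node to decide 0, and a decision of 1 at a correct node
implies every correct node proposed 1. -/
theorem bvp_validity_agreement {Node End : Type*} [DecidableEq End]
    (Correct : Node → Prop)
    (rcv : Node → Finset End) (app : Finset End → Bool)
    (propose decision : Node → Bool)
    (hsame : ∀ i j, Correct i → Correct j → rcv i = rcv j)
    (hprop : ∀ i, Correct i → (propose i = false ↔ app (rcv i) = true))
    (hdec : ∀ i, Correct i →
      decision i = if propose i = false then false else !app (rcv i)) :
    (∀ i j, Correct i → Correct j → decision i = decision j) ∧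
    (∀ i, Correct i → propose i = false → ∀ j, Correct j → decision j = false) ∧
    (∀ i, Correct i → decision i = true → ∀ j, Correct j → propose j = true) := by
  have key : ∀ i, Correct i → decision i = !app (rcv i) := by
    intro i hi
    rw [hdec i hi]
    by_cases h : propose i = false
    · simp [h, (hprop i hi).mp h]
    · simp [h]
  refine ⟨?_, ?_, ?_⟩
  · intro i j hi hj
    rw [key i hi, key j hj, hsame i j hi hj]
  · intro i hi hp j hj
    rw [key j hj, ← hsame i j hi hj, (hprop i hi).mp hp]
    rfl
  · intro i hi hd j hj
    rw [key i hi] at hd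
    by_contra h
    simp only [Bool.not_eq_true] at h
    have := (hprop j hj).mp h
    rw [hsame i j hi hj, this] at hd
    simp at hd
end

section
/- No two correct nodes can finalize conflicting transactions in opposite ways: if at correct node i transaction q is Committed (has ≥ ω unconditional endorsements from distinct endorsers) and at correct node j the conflicting transaction r is Committed, and correct nodes never unconditionally endorse both of two conflicting transactions, with at most f Byzantine endorsers among n and ω > (n+f)/2, then a contradiction follows. -/
/-- No two correct nodes can commit two conflicting transactions: ω unconditional
endorsements for each, with correct endorsers endorsing at most one of the pair,
at most f Byzantine among n, and ω > (n+f)/2, yields a contradiction. -/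
theorem no_conflicting_commits {α : Type*} [DecidableEq α] (n f ω : ℕ)
    (E B Qi Rj : Finset α)
    (hBE : B ⊆ E) (hQ : Qi ⊆ E) (hR : Rj ⊆ E)
    (hn : E.card = n) (hf : B.card ≤ f)
    (hω : n + f < 2 * ω)
    (hdisj : Disjoint (Qi \ B) (Rj \ B))
    (hQc : ω ≤ Qi.card) (hRc : ω ≤ Rj.card) : False := by
  have hsub : Qi ∩ Rj ⊆ B := by
    intro x hx
    simp only [Finset.mem_inter] at hx
    by_contra hxB
    exact (Finset.disjoint_left.mp hdisj)
      (Finset.mem_sdiff.mpr ⟨hx.1, hxB⟩) (Finset.mem_sdiff.mpr ⟨hx.2, hxB⟩)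
  have hint : (Qi ∩ Rj).card ≤ f := le_trans (Finset.card_le_card hsub) hf
  have hun : (Qi ∪ Rj).card ≤ n := hn ▸ Finset.card_le_card (Finset.union_subset hQ hR)
  have := Finset.card_union_add_card_inter Qi Rj
  omega
end
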